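/- arXiv:1912.11392 — 3 statements merged into one kernel-verified Lean document; each statement's English description precedes it below -/
import Mathlib

section
/- Let K ≥ 1, let C be a K×K Hermitian complex matrix, h ∈ ℂ^K, and let ε ≥ 0, t ∈ ℝ, μ ≥ 0 be real numbers. Define the (K+1)×(K+1) Hermitian block matrix T = fromBlocks( μ·I_K + C , C h , (C h)† , h† C h − t − μ·ε² ), where C h is treated as a K×1 column, (C h)† as the conjugate-transpose 1×K row, and the (2,2) block is the 1×1 matrix with the indicated real entry. If T is positive semidefinite, then for every η ∈ ℂ^K with ‖η‖ ≤ ε, the (real) quadratic form (h + η)† C (h + η) satisfies (h + η)† C (h + η) ≥ t. -/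
/-!
Testing the positive semidefinite matrix `T` against the vector `(η, 1)` gives
`(h + η)† C (h + η) + μ (‖η‖² - ε²) - t ≥ 0`; when `‖η‖ ≤ ε` and `μ ≥ 0`, the middle term is
nonpositive, which leaves `(h + η)† C (h + η) ≥ t`.
-/

open Matrix Complex ComplexOrder

section BorderedMatrix

variable {α n : Type*} [CommRing α] [StarRing α] [Fintype n]

lemma star_sumElim_one_dotProduct_fromBlocks_replicateCol_mulVec (A : Matrix n n α)
    (v x : n → α) (d : α) :
    star (Sum.elim x 1) ⬝ᵥ
        (fromBlocks A (replicateCol (Fin 1) v) (replicateRow (Fin 1) (star v))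
            (of fun _ _ : Fin 1 => d) *ᵥ Sum.elim x 1) =
      star x ⬝ᵥ (A *ᵥ x) + star x ⬝ᵥ v + star v ⬝ᵥ x + d := by
  have hcol : replicateCol (Fin 1) v *ᵥ 1 = v := by
    ext; simp [mulVec, dotProduct_one]
  have hd : (of fun _ _ : Fin 1 => d) *ᵥ 1 = fun _ => d := by
    ext; simp [mulVec, dotProduct_one]
  simp [fromBlocks_mulVec, Function.star_sumElim, sumElim_dotProduct_sumElim, hcol, hd,
    one_dotProduct, dotProduct_add, replicateRow_mulVec_eq_const, add_assoc]

lemma Matrix.IsHermitian.star_add_dotProduct_mulVec_add {C : Matrix n n α} (hC : C.IsHermitian)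
    (h η : n → α) :
    star (h + η) ⬝ᵥ (C *ᵥ (h + η)) =
      star η ⬝ᵥ (C *ᵥ η) + star η ⬝ᵥ (C *ᵥ h) + star (C *ᵥ h) ⬝ᵥ η + star h ⬝ᵥ (C *ᵥ h) := by
  rw [star_mulVec, hC.eq, ← dotProduct_mulVec]
  simp only [star_add, mulVec_add, dotProduct_add, add_dotProduct]
  ring

lemma Matrix.IsHermitian.star_sumElim_one_dotProduct_fromBlocks_mulVec [DecidableEq n]
    {C : Matrix n n α} (hC : C.IsHermitian) (h η : n → α) (μ t δ : α) :
    star (Sum.elim η (1 : Fin 1 → α)) ⬝ᵥ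
        (Matrix.fromBlocks (μ • (1 : Matrix n n α) + C) (replicateCol (Fin 1) (C *ᵥ h))
            (replicateRow (Fin 1) (star (C *ᵥ h)))
            (of fun _ _ : Fin 1 => star h ⬝ᵥ (C *ᵥ h) - t - δ) *ᵥ Sum.elim η 1) =
      star (h + η) ⬝ᵥ (C *ᵥ (h + η)) + μ * (star η ⬝ᵥ η) - t - δ := by
  rw [star_sumElim_one_dotProduct_fromBlocks_replicateCol_mulVec,
    hC.star_add_dotProduct_mulVec_add, add_mulVec, smul_mulVec, one_mulVec, dotProduct_add,
    dotProduct_smul, smul_eq_mul]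
  ring

end BorderedMatrix

lemma star_dotProduct_self_eq_sum_norm_sq {𝕜 n : Type*} [RCLike 𝕜] [Fintype n] (η : n → 𝕜) :
    star η ⬝ᵥ η = ((∑ i, ‖η i‖ ^ 2 : ℝ) : 𝕜) := by
  simp [dotProduct, RCLike.conj_mul]

theorem lmi_implies_robust_energy_constraint_general
    (K : ℕ)
    (C : Matrix (Fin K) (Fin K) ℂ) (hC : C.IsHermitian)
    (h : Fin K → ℂ) (ε t μ : ℝ) (hμ : 0 ≤ μ)
    (hT : (Matrix.fromBlocks
        ((μ : ℂ) • (1 : Matrix (Fin K) (Fin K) ℂ) + C)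
        (Matrix.replicateCol (Fin 1) (C *ᵥ h))
        (Matrix.replicateRow (Fin 1) (star (C *ᵥ h)))
        (Matrix.of fun _ _ : Fin 1 =>
          star h ⬝ᵥ (C *ᵥ h) - (t : ℂ) - ((μ * ε ^ 2 : ℝ) : ℂ))).PosSemidef) :
    ∀ η : Fin K → ℂ, Real.sqrt (∑ i, ‖η i‖ ^ 2) ≤ ε →
      t ≤ (star (h + η) ⬝ᵥ (C *ᵥ (h + η))).re := by
  intro η hη
  have hform := (Complex.nonneg_iff.mp (hT.dotProduct_mulVec_nonneg (Sum.elim η 1))).1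
  rw [hC.star_sumElim_one_dotProduct_fromBlocks_mulVec, star_dotProduct_self_eq_sum_norm_sq]
    at hform
  simp only [sub_re, add_re, re_ofReal_mul, coe_algebraMap, ofReal_re] at hform
  have hη_sq : ∑ i, ‖η i‖ ^ 2 ≤ ε ^ 2 := (Real.sqrt_le_iff.mp hη).2
  linarith [mul_le_mul_of_nonneg_left hη_sq hμ]

/-- Sufficiency direction of Lemma 1: if the block matrix
`T = fromBlocks (μ I + C) (C h) ((C h)†) (h† C h − t − μ ε²)` is positive
semidefinite, then for every estimation error `η` with Euclidean norm at most
`ε`, the harvested energy `(h + η)† C (h + η)` is at least `t`. -/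
theorem lmi_implies_robust_energy_constraint
    (K : ℕ) (hK : 1 ≤ K)
    (C : Matrix (Fin K) (Fin K) ℂ) (hC : C.IsHermitian)
    (h : Fin K → ℂ) (ε t μ : ℝ) (hε : 0 ≤ ε) (hμ : 0 ≤ μ)
    (hT : (Matrix.fromBlocks
        ((μ : ℂ) • (1 : Matrix (Fin K) (Fin K) ℂ) + C)
        (Matrix.replicateCol (Fin 1) (C *ᵥ h))
        (Matrix.replicateRow (Fin 1) (star (C *ᵥ h)))
        (Matrix.of fun _ _ : Fin 1 =>
          star h ⬝ᵥ (C *ᵥ h) - (t : ℂ) - ((μ * ε ^ 2 : ℝ) : ℂ))).PosSemidef) :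
    ∀ η : Fin K → ℂ, Real.sqrt (∑ i, ‖η i‖ ^ 2) ≤ ε →
      t ≤ (star (h + η) ⬝ᵥ (C *ᵥ (h + η))).re :=
  lmi_implies_robust_energy_constraint_general K C hC h ε t μ hμ hT
end

section
/- (S-procedure for Hermitian quadratic functions.) Let K ≥ 1, let A_1, A_2 be K×K Hermitian complex matrices, b_1, b_2 ∈ ℂ^K, and c_1, c_2 ∈ ℝ. For g = 1, 2 define f_g(η) = η† A_g η + 2·Re(b_g† η) + c_g (a real-valued function of η ∈ ℂ^K), and define the (K+1)×(K+1) Hermitian block matrices M_g = fromBlocks( A_g , b_g , b_g† , c_g ). Suppose there exists η̂ ∈ ℂ^K with f_1(η̂) < 0. Then the implication (for all η ∈ ℂ^K, f_1(η) ≤ 0 → f_2(η) ≤ 0) holds if and only if there exists a real μ ≥ 0 such that μ·M_1 − M_2 is positive semidefinite (i.e., M_2 ⪯ μ·M_1 in the Loewner order). -/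
/-
Homogenize: with `x = (η, 1)` one has `f_g η = x† M_g x`, and a point with last coordinate
`τ ≠ 0` rescales to `(η/τ, 1)`; these points are dense, so the implication `f₁ ≤ 0 → f₂ ≤ 0`
becomes `x† M₁ x < 0 → x† M₂ x ≤ 0` for all `x`. The joint range `{(x† M₁ x, x† M₂ x)}` is the
cone over the numerical range of `M₁ + i M₂`, hence convex (Toeplitz–Hausdorff), and it misses the
open quadrant `{a < 0 < b}`. A line through the origin separates the two; the Slater point forces
it to be non-vertical, and its slope is the multiplier `μ`.
-/

open Matrix Complex ComplexOrder
open ComplexConjugate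

theorem Dense.forall_neg_imp_nonpos {X : Type*} [TopologicalSpace X] {S : Set X} (hS : Dense S)
    {f g : X → ℝ} (hf : Continuous f) (hg : Continuous g) (h : ∀ x ∈ S, f x < 0 → g x ≤ 0)
    {x : X} (hx : f x < 0) : g x ≤ 0 :=
  closure_minimal (fun y hy => h y hy.2 hy.1) (isClosed_le hg continuous_const)
    (hS.open_subset_closure_inter (isOpen_lt hf continuous_const) hx)

lemma exists_norm_eq_one_mul_add_conj_mul_eq_ofReal_mul (u w : ℂ) {v : ℂ} (hv : v ≠ 0) :
    ∃ c : ℂ, ‖c‖ = 1 ∧ ∃ r : ℝ, c * u + conj c * w = r * v := by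
  set d := u * conj v - conj w * v
  set c := exp (↑(-arg d) * I)
  have hcd : c * d = ‖d‖ := by
    conv_lhs => rw [← norm_mul_exp_arg_mul_I d]
    rw [mul_left_comm, ← Complex.exp_add, ofReal_neg, neg_mul, neg_add_cancel, exp_zero, mul_one]
  set e := c * u + conj c * w
  have he : (e * conj v).im = 0 := by
    have : e * conj v = c * d + (c * conj w * v + conj (c * conj w * v)) := by
      simp only [e, d, map_mul, conj_conj]; ring
    rw [this, add_im, add_conj, hcd, ofReal_im, ofReal_im, add_zero]
  refine ⟨c, norm_exp_ofReal_mul_I _, (e * conj v).re / normSq v, ?_⟩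
  have hre : ((e * conj v).re : ℂ) = e * conj v := Complex.ext (by simp) (by simp [he])
  rw [ofReal_div, hre, ← mul_conj, div_mul_eq_mul_div, mul_assoc, mul_comm (conj v)]
  show e = _
  field_simp [hv, (map_ne_zero (starRingEnd ℂ)).2 hv]

theorem Convex.exists_forall_quadrant_neg_forall_nonneg {C : Set ℂ} (hC : Convex ℝ C)
    (h0 : (0 : ℂ) ∈ C) (hC_im : ∀ z ∈ C, z.re < 0 → z.im ≤ 0) :
    ∃ α β : ℝ, (∀ a b : ℝ, a < 0 → 0 < b → a * α + b * β < 0) ∧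
      ∀ z ∈ C, 0 ≤ z.re * α + z.im * β := by
  set O : Set ℂ := {z | z.re < 0} ∩ {z | 0 < z.im}
  have hO : IsOpen O :=
    (isOpen_lt continuous_re continuous_const).inter (isOpen_lt continuous_const continuous_im)
  have hOC : Disjoint O C :=
    Set.disjoint_left.2 fun z hzO hzC => (hC_im z hzC hzO.1).not_gt hzO.2
  obtain ⟨f, u, hfO, hfC⟩ :=
    geometric_hahn_banach_open ((convex_halfSpace_re_lt 0).inter (convex_halfSpace_im_gt 0)) hO
      hC hOC
  set α := f 1
  set β := f I
  have hf : ∀ z : ℂ, f z = z.re * α + z.im * β := fun z => by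
    calc f z = f (z.re • 1 + z.im • I) := by rw [real_smul, real_smul, mul_one, re_add_im]
      _ = z.re * α + z.im * β := by rw [map_add, map_smul, map_smul, smul_eq_mul, smul_eq_mul]
  have hO' : ∀ a b : ℝ, a < 0 → 0 < b → a * α + b * β < u := fun a b ha hb => by
    simpa only [hf] using hfO ⟨a, b⟩ ⟨ha, hb⟩
  have hC' : ∀ z ∈ C, u ≤ z.re * α + z.im * β := fun z hz => hf z ▸ hfC z hz
  -- `O` is a cone, so the separating level `u` can only be `0`.
  have hu : u = 0 := by
    refine le_antisymm (by simpa using hC' 0 h0) (not_lt.1 fun hu => ?_)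
    have h₁ := hO' (-1) 1 (by norm_num) one_pos
    have ht : 0 < u / (-α + β) := div_pos_of_neg_of_neg hu (by linarith)
    have h₂ := hO' (-(u / (-α + β))) (u / (-α + β)) (neg_neg_of_pos ht) ht
    have h₃ : -(u / (-α + β)) * α + u / (-α + β) * β = u := by
      field_simp [(by linarith : -α + β ≠ 0)]
    linarith
  exact ⟨α, β, hu ▸ hO', hu ▸ hC'⟩

theorem Convex.exists_nonneg_im_le_mul_re {C : Set ℂ} (hC : Convex ℝ C) (h0 : (0 : ℂ) ∈ C)
    (hC_im : ∀ z ∈ C, z.re < 0 → z.im ≤ 0) (hneg : ∃ z ∈ C, z.re < 0) :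
    ∃ μ : ℝ, 0 ≤ μ ∧ ∀ z ∈ C, z.im ≤ μ * z.re := by
  obtain ⟨α, β, hO, hC'⟩ := hC.exists_forall_quadrant_neg_forall_nonneg h0 hC_im
  have hα : 0 ≤ α := by
    by_contra! h
    nlinarith [hO (-(|β| + 1)) (-α) (by linarith [abs_nonneg β]) (by linarith),
      le_abs_self β, neg_abs_le β]
  have hβ : β < 0 := by
    refine lt_of_le_of_ne (not_lt.1 fun h => ?_) fun hβ => ?_
    · nlinarith [hO (-β) (|α| + 1) (by linarith) (by positivity), le_abs_self α]
    · obtain ⟨z, hzC, hz⟩ := hneg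
      have h₁ := hC' z hzC
      have h₂ := hO (-1) 1 (by norm_num) one_pos
      rw [hβ, mul_zero, add_zero] at h₁ h₂
      exact (mul_neg_of_neg_of_pos hz (by linarith)).not_ge h₁
  refine ⟨α / -β, div_nonneg hα (by linarith), fun z hz => ?_⟩
  rw [div_mul_eq_mul_div, le_div_iff₀ (by linarith)]
  linarith [hC' z hz]

section NumericalRange

variable {n : Type*} [Fintype n]

lemma star_smul_dotProduct_mulVec_smul (M : Matrix n n ℂ) (c : ℂ) (x : n → ℂ) :
    star (c • x) ⬝ᵥ (M *ᵥ (c • x)) = normSq c * (star x ⬝ᵥ (M *ᵥ x)) := by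
  simp only [star_smul, mulVec_smul, smul_dotProduct, dotProduct_smul, smul_eq_mul,
    ← mul_conj, RCLike.star_def]
  ring

/-- Toeplitz–Hausdorff theorem, for the cone over the numerical range. -/
theorem convex_range_star_dotProduct_mulVec (N : Matrix n n ℂ) :
    Convex ℝ (Set.range fun x : n → ℂ => star x ⬝ᵥ (N *ᵥ x)) := by
  rintro _ ⟨x, rfl⟩ _ ⟨y, rfl⟩ s t hs ht hst
  dsimp only
  set a := star x ⬝ᵥ (N *ᵥ x)
  set b := star y ⬝ᵥ (N *ᵥ y)
  obtain hab | hab := eq_or_ne b a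
  · exact ⟨x, by rw [hab, ← add_smul, hst, one_smul]⟩
  obtain ⟨c, hc, r, hr⟩ := exists_norm_eq_one_mul_add_conj_mul_eq_ofReal_mul
    (star x ⬝ᵥ (N *ᵥ y)) (star y ⬝ᵥ (N *ᵥ x)) (sub_ne_zero.2 hab)
  -- The phase `c` puts the cross term on the line `ℝ (b - a)`, so along
  -- `cos θ • x + (sin θ * c) • y` the form stays on that line and runs from `a` to `b`.
  have hcc : conj c * c = 1 := by rw [mul_comm, mul_conj, normSq_eq_norm_sq, hc]; simp
  have hquad : ∀ p q : ℝ, p ^ 2 + q ^ 2 = 1 →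
      star ((p : ℂ) • x + (q * c) • y) ⬝ᵥ (N *ᵥ ((p : ℂ) • x + (q * c) • y)) =
        a + ((q ^ 2 + r * p * q : ℝ) : ℂ) * (b - a) := by
    intro p q hpq
    have hpq' : (p : ℂ) ^ 2 + (q : ℂ) ^ 2 = 1 := by exact_mod_cast hpq
    simp only [star_add, star_smul, mulVec_add, mulVec_smul, dotProduct_add, add_dotProduct,
      smul_dotProduct, dotProduct_smul, smul_eq_mul, star_mul', RCLike.star_def, conj_ofReal,
      ofReal_add, ofReal_mul, ofReal_pow]
    linear_combination (p * q : ℂ) * hr + (q ^ 2 * b) * hcc + a * hpq'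
  obtain ⟨θ, -, hθ⟩ : ∃ θ ∈ Set.Icc 0 (Real.pi / 2),
      Real.sin θ ^ 2 + r * Real.cos θ * Real.sin θ = t := by
    refine intermediate_value_Icc (by positivity) (by fun_prop) ?_
    simpa using ⟨ht, (by linarith : t ≤ 1)⟩
  refine ⟨_, (hquad _ _ (Real.cos_sq_add_sin_sq θ)).trans ?_⟩
  rw [hθ, eq_sub_of_add_eq hst, Complex.real_smul, Complex.real_smul]
  push_cast
  ring

lemma posSemidef_ofReal_smul_sub_iff {M₁ M₂ : Matrix n n ℂ} (h₁ : M₁.IsHermitian)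
    (h₂ : M₂.IsHermitian) (μ : ℝ) :
    ((μ : ℂ) • M₁ - M₂).PosSemidef ↔
      ∀ x, (star x ⬝ᵥ (M₂ *ᵥ x)).re ≤ μ * (star x ⬝ᵥ (M₁ *ᵥ x)).re := by
  have hH : ((μ : ℂ) • M₁ - M₂).IsHermitian := (h₁.smul (conj_ofReal μ)).sub h₂
  rw [posSemidef_iff_dotProduct_mulVec, and_iff_right hH]
  refine forall_congr' fun x => ?_
  have him := hH.im_star_dotProduct_mulVec_self x
  rw [RCLike.im_to_complex] at him
  rw [Complex.nonneg_iff, him, and_iff_left rfl, sub_mulVec, dotProduct_sub, smul_mulVec,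
    dotProduct_smul, smul_eq_mul, sub_re, re_ofReal_mul, sub_nonneg]

theorem exists_nonneg_re_le_mul_re_of_neg_imp_nonpos {M₁ M₂ : Matrix n n ℂ}
    (h₁ : M₁.IsHermitian) (h₂ : M₂.IsHermitian)
    (himp : ∀ x, (star x ⬝ᵥ (M₁ *ᵥ x)).re < 0 → (star x ⬝ᵥ (M₂ *ᵥ x)).re ≤ 0)
    (hslater : ∃ x, (star x ⬝ᵥ (M₁ *ᵥ x)).re < 0) :
    ∃ μ : ℝ, 0 ≤ μ ∧ ∀ x, (star x ⬝ᵥ (M₂ *ᵥ x)).re ≤ μ * (star x ⬝ᵥ (M₁ *ᵥ x)).re := by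
  -- The joint map `x ↦ (x† M₁ x, x† M₂ x)` is the quadratic form of `M₁ + i M₂`, read in `ℂ`.
  have hN : ∀ x, star x ⬝ᵥ ((M₁ + I • M₂) *ᵥ x) =
      ⟨(star x ⬝ᵥ (M₁ *ᵥ x)).re, (star x ⬝ᵥ (M₂ *ᵥ x)).re⟩ := fun x => by
    have h₁x := h₁.im_star_dotProduct_mulVec_self x
    have h₂x := h₂.im_star_dotProduct_mulVec_self x
    rw [RCLike.im_to_complex] at h₁x h₂x
    apply Complex.ext <;> simp [add_mulVec, smul_mulVec, dotProduct_add, dotProduct_smul, h₁x, h₂x]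
  obtain ⟨x₀, hx₀⟩ := hslater
  obtain ⟨μ, hμ, hle⟩ :=
    (convex_range_star_dotProduct_mulVec (M₁ + I • M₂)).exists_nonneg_im_le_mul_re ⟨0, by simp⟩
      (by rintro _ ⟨x, rfl⟩; simpa only [hN] using himp x)
      ⟨_, ⟨x₀, rfl⟩, by simpa only [hN] using hx₀⟩
  exact ⟨μ, hμ, fun x => by simpa only [hN] using hle _ ⟨x, rfl⟩⟩

end NumericalRange

section Homogenization

variable {m : Type*}

lemma isHermitian_fromBlocks_replicateCol {A : Matrix m m ℂ} (hA : A.IsHermitian) (b : m → ℂ)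
    (c : ℝ) :
    (fromBlocks A (replicateCol (Fin 1) b) (replicateRow (Fin 1) (star b))
      (of fun _ _ : Fin 1 => (c : ℂ))).IsHermitian :=
  hA.fromBlocks (conjTranspose_replicateCol b) (by ext; simp)

lemma re_star_sumElim_one_dotProduct_fromBlocks_mulVec [Fintype m] (A : Matrix m m ℂ)
    (b : m → ℂ) (c : ℝ) (η : m → ℂ) :
    (star (Sum.elim η 1) ⬝ᵥ (fromBlocks A (replicateCol (Fin 1) b) (replicateRow (Fin 1) (star b))
      (of fun _ _ : Fin 1 => (c : ℂ)) *ᵥ Sum.elim η 1)).re =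
        (star η ⬝ᵥ (A *ᵥ η)).re + 2 * (star b ⬝ᵥ η).re + c := by
  have hcol : replicateCol (Fin 1) b *ᵥ 1 = b := by ext; simp [mulVec, dotProduct]
  have hrow : (1 : Fin 1 → ℂ) ⬝ᵥ (replicateRow (Fin 1) (star b) *ᵥ η) = star b ⬝ᵥ η := by
    simp [mulVec, dotProduct]
  have hc : (1 : Fin 1 → ℂ) ⬝ᵥ ((of fun _ _ : Fin 1 => (c : ℂ)) *ᵥ 1) = c := by
    simp [mulVec, dotProduct]
  have hconj : star η ⬝ᵥ b = conj (star b ⬝ᵥ η) := by simp [dotProduct, mul_comm]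
  rw [fromBlocks_mulVec, Function.star_sumElim, sumElim_dotProduct_sumElim, Sum.elim_comp_inl,
    Sum.elim_comp_inr, star_one, dotProduct_add, dotProduct_add, hcol, hrow, hc, hconj]
  simp only [add_re, conj_re, ofReal_re]
  ring

lemma re_star_dotProduct_mulVec_nonpos_of_sumElim_one [Fintype m]
    {M₁ M₂ : Matrix (m ⊕ Fin 1) (m ⊕ Fin 1) ℂ}
    (h : ∀ η : m → ℂ, (star (Sum.elim η 1) ⬝ᵥ (M₁ *ᵥ Sum.elim η 1)).re ≤ 0 →
      (star (Sum.elim η 1) ⬝ᵥ (M₂ *ᵥ Sum.elim η 1)).re ≤ 0)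
    {x : m ⊕ Fin 1 → ℂ} (hx : (star x ⬝ᵥ (M₁ *ᵥ x)).re < 0) :
    (star x ⬝ᵥ (M₂ *ᵥ x)).re ≤ 0 := by
  refine ((dense_compl_singleton 0).preimage (isOpenMap_eval (Sum.inr 0))).forall_neg_imp_nonpos
    (f := fun x => (star x ⬝ᵥ (M₁ *ᵥ x)).re) (g := fun x => (star x ⬝ᵥ (M₂ *ᵥ x)).re)
    (by fun_prop) (by fun_prop) (fun x hx₀ hx => ?_) hx
  set τ := x (Sum.inr 0)
  have hτ : τ ≠ 0 := hx₀
  have hx_eq : x = τ • Sum.elim (τ⁻¹ • (x ∘ Sum.inl)) 1 := by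
    ext (i | i)
    · simp [mul_inv_cancel_left₀ hτ]
    · simp [τ, Fin.fin_one_eq_zero i]
  rw [hx_eq, star_smul_dotProduct_mulVec_smul, re_ofReal_mul] at hx ⊢
  exact mul_nonpos_of_nonneg_of_nonpos (normSq_nonneg τ)
    (h _ (neg_of_mul_neg_right hx (normSq_nonneg τ)).le)

end Homogenization

theorem s_procedure_hermitian_quadratics_general
    (K : ℕ)
    (A₁ A₂ : Matrix (Fin K) (Fin K) ℂ)
    (hA₁ : A₁.IsHermitian) (hA₂ : A₂.IsHermitian)
    (b₁ b₂ : Fin K → ℂ) (c₁ c₂ : ℝ)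
    (f₁ f₂ : (Fin K → ℂ) → ℝ)
    (hf₁ : ∀ η, f₁ η = (star η ⬝ᵥ (A₁ *ᵥ η)).re + 2 * (star b₁ ⬝ᵥ η).re + c₁)
    (hf₂ : ∀ η, f₂ η = (star η ⬝ᵥ (A₂ *ᵥ η)).re + 2 * (star b₂ ⬝ᵥ η).re + c₂)
    (M₁ M₂ : Matrix (Fin K ⊕ Fin 1) (Fin K ⊕ Fin 1) ℂ)
    (hM₁ : M₁ = Matrix.fromBlocks A₁ (Matrix.replicateCol (Fin 1) b₁)
      (Matrix.replicateRow (Fin 1) (star b₁)) (Matrix.of fun _ _ : Fin 1 => (c₁ : ℂ)))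
    (hM₂ : M₂ = Matrix.fromBlocks A₂ (Matrix.replicateCol (Fin 1) b₂)
      (Matrix.replicateRow (Fin 1) (star b₂)) (Matrix.of fun _ _ : Fin 1 => (c₂ : ℂ)))
    (hslater : ∃ ηhat : Fin K → ℂ, f₁ ηhat < 0) :
    (∀ η : Fin K → ℂ, f₁ η ≤ 0 → f₂ η ≤ 0) ↔
      ∃ μ : ℝ, 0 ≤ μ ∧ ((μ : ℂ) • M₁ - M₂).PosSemidef := by
  have hM₁h : M₁.IsHermitian := hM₁ ▸ isHermitian_fromBlocks_replicateCol hA₁ b₁ c₁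
  have hM₂h : M₂.IsHermitian := hM₂ ▸ isHermitian_fromBlocks_replicateCol hA₂ b₂ c₂
  have hq₁ : ∀ η, (star (Sum.elim η 1) ⬝ᵥ (M₁ *ᵥ Sum.elim η 1)).re = f₁ η := fun η => by
    rw [hM₁, hf₁, re_star_sumElim_one_dotProduct_fromBlocks_mulVec]
  have hq₂ : ∀ η, (star (Sum.elim η 1) ⬝ᵥ (M₂ *ᵥ Sum.elim η 1)).re = f₂ η := fun η => by
    rw [hM₂, hf₂, re_star_sumElim_one_dotProduct_fromBlocks_mulVec]
  simp only [posSemidef_ofReal_smul_sub_iff hM₁h hM₂h]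
  constructor
  · intro himp
    obtain ⟨η₀, hη₀⟩ := hslater
    refine exists_nonneg_re_le_mul_re_of_neg_imp_nonpos hM₁h hM₂h
      (fun x hx => re_star_dotProduct_mulVec_nonpos_of_sumElim_one ?_ hx) ⟨Sum.elim η₀ 1, ?_⟩
    · simpa only [hq₁, hq₂] using himp
    · rwa [hq₁]
  · rintro ⟨μ, hμ, hle⟩ η hη
    calc f₂ η ≤ μ * f₁ η := by simpa only [hq₁, hq₂] using hle (Sum.elim η 1)
      _ ≤ 0 := mul_nonpos_of_nonneg_of_nonpos hμ hη

/-- S-procedure for Hermitian quadratic functions: given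
`f_g η = η† A_g η + 2 Re (b_g† η) + c_g` and the block matrices
`M_g = fromBlocks A_g b_g b_g† c_g`, if `f₁` is strictly negative somewhere,
then `(∀ η, f₁ η ≤ 0 → f₂ η ≤ 0)` holds iff `M₂ ⪯ μ M₁` for some `μ ≥ 0`. -/
theorem s_procedure_hermitian_quadratics
    (K : ℕ) (hK : 1 ≤ K)
    (A₁ A₂ : Matrix (Fin K) (Fin K) ℂ)
    (hA₁ : A₁.IsHermitian) (hA₂ : A₂.IsHermitian)
    (b₁ b₂ : Fin K → ℂ) (c₁ c₂ : ℝ)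
    (f₁ f₂ : (Fin K → ℂ) → ℝ)
    (hf₁ : ∀ η, f₁ η = (star η ⬝ᵥ (A₁ *ᵥ η)).re + 2 * (star b₁ ⬝ᵥ η).re + c₁)
    (hf₂ : ∀ η, f₂ η = (star η ⬝ᵥ (A₂ *ᵥ η)).re + 2 * (star b₂ ⬝ᵥ η).re + c₂)
    (M₁ M₂ : Matrix (Fin K ⊕ Fin 1) (Fin K ⊕ Fin 1) ℂ)
    (hM₁ : M₁ = Matrix.fromBlocks A₁ (Matrix.replicateCol (Fin 1) b₁)
      (Matrix.replicateRow (Fin 1) (star b₁)) (Matrix.of fun _ _ : Fin 1 => (c₁ : ℂ)))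
    (hM₂ : M₂ = Matrix.fromBlocks A₂ (Matrix.replicateCol (Fin 1) b₂)
      (Matrix.replicateRow (Fin 1) (star b₂)) (Matrix.of fun _ _ : Fin 1 => (c₂ : ℂ)))
    (hslater : ∃ ηhat : Fin K → ℂ, f₁ ηhat < 0) :
    (∀ η : Fin K → ℂ, f₁ η ≤ 0 → f₂ η ≤ 0) ↔
      ∃ μ : ℝ, 0 ≤ μ ∧ ((μ : ℂ) • M₁ - M₂).PosSemidef :=
  s_procedure_hermitian_quadratics_general K A₁ A₂ hA₁ hA₂ b₁ b₂ c₁ c₂ f₁ f₂ hf₁ hf₂ M₁ M₂ hM₁ hM₂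
    hslater
end

section
/- Let K ≥ 1, let C be a K×K Hermitian positive semidefinite complex matrix, t ∈ ℝ, and let I be a finite index set with channel estimates h_i ∈ ℂ^K and error bounds ε_i > 0 for each i ∈ I. Then the following are equivalent: (i) for every i ∈ I and every η ∈ ℂ^K with ‖η‖ ≤ ε_i, (h_i + η)† C (h_i + η) ≥ t; (ii) there exists a family of reals μ_i ≥ 0 (i ∈ I) such that for every i ∈ I the Hermitian block matrix T_i = fromBlocks( μ_i·I_K + C , C h_i , (C h_i)† , h_i† C h_i − t − μ_i·ε_i² ) is positive semidefinite. Consequently the semidefinite program (6) of the paper has the same feasible pairs (C, t) as the original robust max-min problem (2). -/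
/-!
Fix one receiver and write `q(x) = x† C x`. Splitting a test vector of the block matrix `T(μ)`
as `(η, c)` and rescaling by `c`, `T(μ)` is positive semidefinite iff
`q(h + η) + μ ‖η‖² ≥ t + μ ε²` for all `η`, i.e. iff `μ ≥ 0` is a Lagrange multiplier for the
constraint `‖η‖² ≤ ε²`. Such a multiplier exists by convex duality: for `μ > 0` the penalized
energy `q(h + η) + μ ‖η‖²` is minimized at `p(μ) = -(μ I + C)⁻¹ C h`, and `‖p(μ)‖` depends
continuously on `μ` and decays like `1 / μ`. If `‖p(μ)‖` ever reaches `ε`, the intermediate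
value theorem yields a `μ` with `‖p(μ)‖ = ε`, which is the multiplier; otherwise every `p(μ)` is
feasible and `μ = 0` works in the limit `μ → 0⁺`.
-/

open Matrix Complex ComplexOrder

section

variable {n : Type*} [Fintype n]

lemma star_dotProduct_self_eq_sum_norm_sq_s16 (v : n → ℂ) :
    star v ⬝ᵥ v = ((∑ j, ‖v j‖ ^ 2 : ℝ) : ℂ) := by
  simp only [dotProduct, Pi.star_apply, Complex.star_def, ofReal_sum, ofReal_pow,
    ← Complex.mul_conj', mul_comm]

lemma sum_norm_sq_smul (c : ℂ) (v : n → ℂ) :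
    ∑ j, ‖(c • v) j‖ ^ 2 = ‖c‖ ^ 2 * ∑ j, ‖v j‖ ^ 2 := by
  simp only [Pi.smul_apply, smul_eq_mul, norm_mul, mul_pow, Finset.mul_sum]

lemma re_star_dotProduct_le (v w : n → ℂ) :
    (star v ⬝ᵥ w).re ≤ √(∑ j, ‖v j‖ ^ 2) * √(∑ j, ‖w j‖ ^ 2) := by
  have hinner : star v ⬝ᵥ w = inner ℂ (WithLp.toLp 2 v) (WithLp.toLp 2 w) := by
    rw [EuclideanSpace.inner_toLp_toLp, dotProduct_comm]
  calc (star v ⬝ᵥ w).re ≤ ‖star v ⬝ᵥ w‖ := re_le_norm _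
    _ ≤ _ := by
      rw [hinner, ← EuclideanSpace.norm_eq, ← EuclideanSpace.norm_eq]
      exact norm_inner_le_norm _ _

lemma re_star_smul_dotProduct_mulVec_smul (A : Matrix n n ℂ) (c : ℂ) (x : n → ℂ) :
    (star (c • x) ⬝ᵥ (A *ᵥ (c • x))).re = ‖c‖ ^ 2 * (star x ⬝ᵥ (A *ᵥ x)).re := by
  rw [star_smul, mulVec_smul, smul_dotProduct, dotProduct_smul, smul_smul, smul_eq_mul,
    Complex.star_def, Complex.conj_mul', ← ofReal_pow, re_ofReal_mul]

namespace Matrix.IsHermitian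

variable {A : Matrix n n ℂ}

lemma ofReal_re_star_dotProduct_mulVec (hA : A.IsHermitian) (x : n → ℂ) :
    ((star x ⬝ᵥ (A *ᵥ x)).re : ℂ) = star x ⬝ᵥ (A *ᵥ x) :=
  Complex.ext rfl (by simpa using (hA.im_star_dotProduct_mulVec_self x).symm)

lemma star_mulVec_dotProduct (hA : A.IsHermitian) (x y : n → ℂ) :
    star (A *ᵥ x) ⬝ᵥ y = star x ⬝ᵥ (A *ᵥ y) := by
  rw [star_mulVec, ← dotProduct_mulVec, hA.eq]

end Matrix.IsHermitian

end

section

variable {n : Type*} [DecidableEq n] {C : Matrix n n ℂ} {μ : ℝ}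

lemma Matrix.PosSemidef.ofReal_smul_one_add (hC : C.PosSemidef) (hμ : 0 ≤ μ) :
    ((μ : ℂ) • (1 : Matrix n n ℂ) + C).PosSemidef :=
  (PosSemidef.one.smul (Complex.zero_le_real.mpr hμ)).add hC

lemma Matrix.PosSemidef.posDef_ofReal_smul_one_add (hC : C.PosSemidef) (hμ : 0 < μ) :
    ((μ : ℂ) • (1 : Matrix n n ℂ) + C).PosDef :=
  (PosDef.one.smul (Complex.zero_lt_real.mpr hμ)).add_posSemidef hC

variable [Fintype n]

/-- Completing the square: with `(μ I + C) p = -C h`, the penalized energy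
`η ↦ q(h + η) + μ‖η‖²` exceeds its value at `p` by `(η - p)† (μ I + C) (η - p)`. -/
lemma re_star_add_dotProduct_mulVec_add_le (hC : C.PosSemidef) (hμ : 0 ≤ μ) {h p : n → ℂ}
    (hp : ((μ : ℂ) • (1 : Matrix n n ℂ) + C) *ᵥ p = -(C *ᵥ h)) (η : n → ℂ) :
    (star (h + p) ⬝ᵥ (C *ᵥ (h + p))).re + μ * ∑ j, ‖p j‖ ^ 2 ≤
      (star (h + η) ⬝ᵥ (C *ᵥ (h + η))).re + μ * ∑ j, ‖η j‖ ^ 2 := by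
  have hCh : C *ᵥ h = -((μ : ℂ) • p) - C *ᵥ p := by
    rw [add_mulVec, smul_mulVec, one_mulVec] at hp
    rw [← neg_add', hp, neg_neg]
  have hh : ∀ y, star h ⬝ᵥ (C *ᵥ y) = -((μ : ℂ) * (star p ⬝ᵥ y)) - star p ⬝ᵥ (C *ᵥ y) := by
    intro y
    rw [← hC.1.star_mulVec_dotProduct, hCh, ← hC.1.star_mulVec_dotProduct]
    simp only [star_sub, star_neg, star_smul, Complex.star_def, conj_ofReal, sub_dotProduct,
      neg_dotProduct, smul_dotProduct, smul_eq_mul]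
  have hid : star (h + η) ⬝ᵥ (C *ᵥ (h + η)) + μ * (star η ⬝ᵥ η) =
      star (h + p) ⬝ᵥ (C *ᵥ (h + p)) + μ * (star p ⬝ᵥ p) +
        star (η - p) ⬝ᵥ (((μ : ℂ) • (1 : Matrix n n ℂ) + C) *ᵥ (η - p)) := by
    simp only [mulVec_add, mulVec_sub, add_mulVec, smul_mulVec, one_mulVec, dotProduct_add,
      dotProduct_sub, add_dotProduct, sub_dotProduct, star_add, star_sub, dotProduct_smul,
      smul_eq_mul, hCh, hh, dotProduct_neg]
    ring
  rw [star_dotProduct_self_eq_sum_norm_sq_s16, star_dotProduct_self_eq_sum_norm_sq_s16] at hid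
  have hre := congrArg Complex.re hid
  simp only [add_re, re_ofReal_mul, ofReal_re] at hre
  have hq : 0 ≤ (star (η - p) ⬝ᵥ (((μ : ℂ) • (1 : Matrix n n ℂ) + C) *ᵥ (η - p))).re :=
    (hC.ofReal_smul_one_add hμ).re_dotProduct_nonneg (η - p)
  linarith

lemma mul_sqrt_sum_norm_sq_le_of_mulVec_eq (hC : C.PosSemidef) {p w : n → ℂ}
    (hp : ((μ : ℂ) • (1 : Matrix n n ℂ) + C) *ᵥ p = -w) :
    μ * √(∑ j, ‖p j‖ ^ 2) ≤ √(∑ j, ‖w j‖ ^ 2) := by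
  have hre : μ * ∑ j, ‖p j‖ ^ 2 + (star p ⬝ᵥ (C *ᵥ p)).re = (star p ⬝ᵥ (-w)).re := by
    rw [← hp, add_mulVec, smul_mulVec, one_mulVec, dotProduct_add, dotProduct_smul,
      star_dotProduct_self_eq_sum_norm_sq_s16, smul_eq_mul, add_re, re_ofReal_mul, ofReal_re]
  have hcs := re_star_dotProduct_le p (-w)
  simp only [Pi.neg_apply, norm_neg] at hcs
  have hq : 0 ≤ (star p ⬝ᵥ (C *ᵥ p)).re := hC.re_dotProduct_nonneg p
  set P := √(∑ j, ‖p j‖ ^ 2)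
  have hP : P * P = ∑ j, ‖p j‖ ^ 2 := Real.mul_self_sqrt (by positivity)
  rcases (show 0 ≤ P from Real.sqrt_nonneg _).eq_or_lt with hP0 | hP0
  · rw [← hP0, mul_zero]; positivity
  · refine le_of_mul_le_mul_right ?_ hP0
    calc μ * P * P = μ * ∑ j, ‖p j‖ ^ 2 := by rw [mul_assoc, hP]
      _ ≤ P * √(∑ j, ‖w j‖ ^ 2) := by linarith
      _ = √(∑ j, ‖w j‖ ^ 2) * P := mul_comm _ _

variable (C) in
/-- The minimizer of the penalized energy `η ↦ q(h + η) + μ‖η‖²` for `μ > 0`. -/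
noncomputable def penalizedMinimizer (h : n → ℂ) (μ : ℝ) : n → ℂ :=
  -(((μ : ℂ) • (1 : Matrix n n ℂ) + C)⁻¹ *ᵥ (C *ᵥ h))

lemma mulVec_penalizedMinimizer (hC : C.PosSemidef) (hμ : 0 < μ) (h : n → ℂ) :
    ((μ : ℂ) • (1 : Matrix n n ℂ) + C) *ᵥ penalizedMinimizer C h μ = -(C *ᵥ h) := by
  have hdet := (isUnit_iff_isUnit_det _).mp (hC.posDef_ofReal_smul_one_add hμ).isUnit
  rw [penalizedMinimizer, mulVec_neg, mulVec_mulVec, mul_nonsing_inv _ hdet, one_mulVec]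

lemma continuousOn_penalizedMinimizer (hC : C.PosSemidef) (h : n → ℂ) :
    ContinuousOn (penalizedMinimizer C h) (Set.Ioi 0) := by
  intro μ hμ
  have hA : Continuous fun μ : ℝ => (μ : ℂ) • (1 : Matrix n n ℂ) + C := by fun_prop
  have hdet := (isUnit_iff_isUnit_det _).mp
    (hC.posDef_ofReal_smul_one_add (Set.mem_Ioi.mp hμ)).isUnit
  have hinv : ContinuousAt (fun μ : ℝ => ((μ : ℂ) • (1 : Matrix n n ℂ) + C)⁻¹) μ :=
    (continuousAt_matrix_inv _ (NormedRing.inverse_continuousAt hdet.unit)).comp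
      (f := fun μ : ℝ => (μ : ℂ) • (1 : Matrix n n ℂ) + C) hA.continuousAt
  exact (((continuous_id.matrix_mulVec continuous_const).continuousAt.comp hinv).neg
    |>.continuousWithinAt : ContinuousWithinAt (penalizedMinimizer C h) _ μ)

end

section

variable {n : Type*} [Fintype n] [DecidableEq n] {C : Matrix n n ℂ} {h : n → ℂ} {t μ ε : ℝ}

variable (C h t μ ε) in
/-- The block matrix `T` of the LMI (6) for a receiver with channel estimate `h`,
error bound `ε` and multiplier `μ`. -/
def energyLMI : Matrix (n ⊕ Fin 1) (n ⊕ Fin 1) ℂ :=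
  fromBlocks ((μ : ℂ) • (1 : Matrix n n ℂ) + C) (replicateCol (Fin 1) (C *ᵥ h))
    (replicateRow (Fin 1) (star (C *ᵥ h)))
    (of fun _ _ : Fin 1 => star h ⬝ᵥ (C *ᵥ h) - (t : ℂ) - ((μ * ε ^ 2 : ℝ) : ℂ))

lemma isHermitian_energyLMI (hC : C.IsHermitian) : (energyLMI C h t μ ε).IsHermitian := by
  refine isHermitian_fromBlocks_iff.mpr ⟨(isHermitian_one.smul (conj_ofReal μ)).add hC,
    conjTranspose_replicateCol _, by rw [conjTranspose_replicateRow, star_star], ?_⟩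
  ext i j
  simp only [conjTranspose_apply, of_apply, star_sub, Complex.star_def, conj_ofReal]
  rw [← Complex.star_def, ← hC.ofReal_re_star_dotProduct_mulVec, star_def, conj_ofReal]

lemma re_star_dotProduct_energyLMI_mulVec (hC : C.IsHermitian) (η : n → ℂ) (c : ℂ) :
    (star (Sum.elim η fun _ => c) ⬝ᵥ (energyLMI C h t μ ε *ᵥ Sum.elim η fun _ => c)).re =
      (star (c • h + η) ⬝ᵥ (C *ᵥ (c • h + η))).re + μ * ∑ j, ‖η j‖ ^ 2
        - ‖c‖ ^ 2 * (t + μ * ε ^ 2) := by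
  have hcol : replicateCol (Fin 1) (C *ᵥ h) *ᵥ (fun _ => c) = c • (C *ᵥ h) := by
    ext i; simp [mulVec, dotProduct, replicateCol, mul_comm]
  have hD : ∀ d : ℂ, (of fun _ _ : Fin 1 => d) *ᵥ (fun _ => c) = fun _ => d * c := by
    intro d; ext; simp [mulVec, dotProduct]
  have hdot : ∀ v : Fin 1 → ℂ, (star fun _ : Fin 1 => c) ⬝ᵥ v = star c * v 0 := by
    simp [dotProduct]
  have hid : star (Sum.elim η fun _ => c) ⬝ᵥ (energyLMI C h t μ ε *ᵥ Sum.elim η fun _ => c) =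
      star (c • h + η) ⬝ᵥ (C *ᵥ (c • h + η)) + μ * (star η ⬝ᵥ η)
        - (star c * c) * (t + ((μ * ε ^ 2 : ℝ) : ℂ)) := by
    rw [energyLMI, fromBlocks_mulVec, Function.star_sumElim, sumElim_dotProduct_sumElim]
    simp only [Sum.elim_comp_inl, Sum.elim_comp_inr, hcol, hD, replicateRow_mulVec_eq_const,
      hC.star_mulVec_dotProduct]
    simp only [hdot, Pi.add_apply, Function.const_apply]
    simp only [mulVec_add, mulVec_smul, add_mulVec, smul_mulVec, one_mulVec,
      star_add, star_smul, add_dotProduct, smul_dotProduct, dotProduct_add,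
      dotProduct_smul, smul_eq_mul, Complex.star_def]
    ring
  rw [hid, star_dotProduct_self_eq_sum_norm_sq_s16, Complex.star_def, Complex.conj_mul']
  simp only [sub_re, add_re, re_ofReal_mul, ofReal_re, ← ofReal_pow, ← ofReal_add]

lemma energyLMI_posSemidef_iff (hC : C.PosSemidef) (hμ : 0 ≤ μ) :
    (energyLMI C h t μ ε).PosSemidef ↔ ∀ η : n → ℂ,
      t + μ * ε ^ 2 ≤ (star (h + η) ⬝ᵥ (C *ᵥ (h + η))).re + μ * ∑ j, ‖η j‖ ^ 2 := by
  constructor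
  · intro hT η
    have hη : 0 ≤ (star (Sum.elim η fun _ => 1) ⬝ᵥ
        (energyLMI C h t μ ε *ᵥ Sum.elim η fun _ => 1)).re := hT.re_dotProduct_nonneg _
    rw [re_star_dotProduct_energyLMI_mulVec hC.1, one_smul, norm_one, one_pow, one_mul] at hη
    linarith
  · intro hm
    refine PosSemidef.of_dotProduct_mulVec_nonneg (isHermitian_energyLMI hC.1) fun x => ?_
    rw [← (isHermitian_energyLMI hC.1).ofReal_re_star_dotProduct_mulVec, Complex.zero_le_real]
    obtain ⟨η, c, rfl⟩ : ∃ η c, x = Sum.elim η fun _ : Fin 1 => c := by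
      refine ⟨x ∘ Sum.inl, x (Sum.inr 0), funext fun j => ?_⟩
      rcases j with j | j
      · rfl
      · rw [Fin.fin_one_eq_zero j]; rfl
    rw [re_star_dotProduct_energyLMI_mulVec hC.1]
    rcases eq_or_ne c 0 with rfl | hc
    · simp only [zero_smul, zero_add, norm_zero]
      have hq : 0 ≤ (star η ⬝ᵥ (C *ᵥ η)).re := hC.re_dotProduct_nonneg η
      have hN : 0 ≤ ∑ j, ‖η j‖ ^ 2 := by positivity
      linarith [mul_nonneg hμ hN]
    · have hq : c • h + η = c • (h + c⁻¹ • η) := by rw [smul_add, smul_inv_smul₀ hc]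
      have hN : ∑ j, ‖η j‖ ^ 2 = ‖c‖ ^ 2 * ∑ j, ‖(c⁻¹ • η) j‖ ^ 2 := by
        rw [← sum_norm_sq_smul, smul_inv_smul₀ hc]
      rw [hq, re_star_smul_dotProduct_mulVec_smul, hN]
      linarith [mul_nonneg (sq_nonneg ‖c‖) (sub_nonneg.mpr (hm (c⁻¹ • η)))]

end

section

variable {n : Type*} [Fintype n] {C : Matrix n n ℂ} {h : n → ℂ} {t ε : ℝ}

lemma le_re_of_multiplier {μ : ℝ} (hμ : 0 ≤ μ) (hm : ∀ η : n → ℂ,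
      t + μ * ε ^ 2 ≤ (star (h + η) ⬝ᵥ (C *ᵥ (h + η))).re + μ * ∑ j, ‖η j‖ ^ 2)
    {η : n → ℂ} (hη : ∑ j, ‖η j‖ ^ 2 ≤ ε ^ 2) : t ≤ (star (h + η) ⬝ᵥ (C *ᵥ (h + η))).re := by
  linarith [hm η, mul_le_mul_of_nonneg_left hη hμ]

variable [DecidableEq n]

open Filter Topology in
theorem exists_multiplier_of_forall_le_re (hC : C.PosSemidef) (hε : 0 < ε)
    (hr : ∀ η : n → ℂ, ∑ j, ‖η j‖ ^ 2 ≤ ε ^ 2 → t ≤ (star (h + η) ⬝ᵥ (C *ᵥ (h + η))).re) :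
    ∃ μ, 0 ≤ μ ∧ ∀ η : n → ℂ,
      t + μ * ε ^ 2 ≤ (star (h + η) ⬝ᵥ (C *ᵥ (h + η))).re + μ * ∑ j, ‖η j‖ ^ 2 := by
  set p := penalizedMinimizer C h
  set G : ℝ → ℝ := fun μ => ∑ j, ‖p μ j‖ ^ 2
  have hdual : ∀ μ, 0 < μ → G μ ≤ ε ^ 2 → ∀ η : n → ℂ,
      t + μ * G μ ≤ (star (h + η) ⬝ᵥ (C *ᵥ (h + η))).re + μ * ∑ j, ‖η j‖ ^ 2 :=
    fun μ hμ hG η => (add_le_add_left (hr _ hG) _).trans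
      (re_star_add_dotProduct_mulVec_add_le hC hμ.le (mulVec_penalizedMinimizer hC hμ h) η)
  by_cases hreach : ∃ μ₀, 0 < μ₀ ∧ ε ^ 2 ≤ G μ₀
  · obtain ⟨μ₀, hμ₀, hGμ₀⟩ := hreach
    set W := √(∑ j, ‖(C *ᵥ h) j‖ ^ 2)
    set μ₁ := max μ₀ (W / ε) + 1
    have hμ₀₁ : μ₀ ≤ μ₁ := by linarith [le_max_left μ₀ (W / ε)]
    have hW : W < μ₁ * ε := (div_lt_iff₀ hε).mp (by linarith [le_max_right μ₀ (W / ε)])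
    have hGμ₁ : G μ₁ < ε ^ 2 := by
      refine (Real.sqrt_lt' hε).mp (lt_of_mul_lt_mul_left ?_ (hμ₀.trans_le hμ₀₁).le)
      exact (mul_sqrt_sum_norm_sq_le_of_mulVec_eq hC
        (mulVec_penalizedMinimizer hC (hμ₀.trans_le hμ₀₁) h)).trans_lt hW
    have hG : ContinuousOn G (Set.Icc μ₀ μ₁) :=
      ((by fun_prop : Continuous fun v : n → ℂ => ∑ j, ‖v j‖ ^ 2).comp_continuousOn
        (continuousOn_penalizedMinimizer hC h)).mono fun μ hμ => hμ₀.trans_le hμ.1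
    obtain ⟨μ, hμ, hGμ⟩ := intermediate_value_Icc' hμ₀₁ hG ⟨hGμ₁.le, hGμ₀⟩
    have hμpos : 0 < μ := hμ₀.trans_le hμ.1
    exact ⟨μ, hμpos.le, fun η => hGμ ▸ hdual μ hμpos hGμ.le η⟩
  · push Not at hreach
    refine ⟨0, le_rfl, fun η => ?_⟩
    simp only [zero_mul, add_zero]
    have hlim : Tendsto (fun μ : ℝ => (star (h + η) ⬝ᵥ (C *ᵥ (h + η))).re + μ * ∑ j, ‖η j‖ ^ 2)
        (𝓝[>] 0) (𝓝 (star (h + η) ⬝ᵥ (C *ᵥ (h + η))).re) :=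
      ((continuous_const.add (continuous_id.mul continuous_const)).tendsto' 0 _
        (by simp)).mono_left nhdsWithin_le_nhds
    refine ge_of_tendsto hlim (eventually_nhdsWithin_of_forall fun μ hμ => ?_)
    have hGnonneg : 0 ≤ μ * G μ := mul_nonneg (le_of_lt hμ) (by positivity)
    linarith [hdual μ hμ (hreach μ hμ).le η]

/-- Lemma 1 of the paper. -/
theorem forall_sqrt_le_imp_le_re_iff_exists_energyLMI_posSemidef (hC : C.PosSemidef)
    (hε : 0 < ε) :
    (∀ η : n → ℂ, √(∑ j, ‖η j‖ ^ 2) ≤ ε → t ≤ (star (h + η) ⬝ᵥ (C *ᵥ (h + η))).re) ↔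
      ∃ μ, 0 ≤ μ ∧ (energyLMI C h t μ ε).PosSemidef := by
  simp_rw [Real.sqrt_le_left hε.le]
  constructor
  · intro hr
    obtain ⟨μ, hμ, hm⟩ := exists_multiplier_of_forall_le_re hC hε hr
    exact ⟨μ, hμ, (energyLMI_posSemidef_iff hC hμ).mpr hm⟩
  · rintro ⟨μ, hμ, hT⟩ η hη
    exact le_re_of_multiplier hμ ((energyLMI_posSemidef_iff hC hμ).mp hT) hη

end

theorem robust_constraints_iff_lmis_family_general
    (K : ℕ)
    (C : Matrix (Fin K) (Fin K) ℂ) (hC : C.PosSemidef)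
    (t : ℝ) (ι : Type)
    (h : ι → Fin K → ℂ) (ε : ι → ℝ) (hε : ∀ i, 0 < ε i) :
    (∀ i : ι, ∀ η : Fin K → ℂ, Real.sqrt (∑ j, ‖η j‖ ^ 2) ≤ ε i →
        t ≤ (star (h i + η) ⬝ᵥ (C *ᵥ (h i + η))).re) ↔
      ∃ μ : ι → ℝ, ∀ i : ι, 0 ≤ μ i ∧
        (Matrix.fromBlocks
          ((μ i : ℂ) • (1 : Matrix (Fin K) (Fin K) ℂ) + C)
          (Matrix.replicateCol (Fin 1) (C *ᵥ h i))
          (Matrix.replicateRow (Fin 1) (star (C *ᵥ h i)))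
          (Matrix.of fun _ _ : Fin 1 =>
            star (h i) ⬝ᵥ (C *ᵥ h i) - (t : ℂ) - ((μ i * ε i ^ 2 : ℝ) : ℂ))).PosSemidef :=
  (forall_congr' fun i =>
    forall_sqrt_le_imp_le_re_iff_exists_energyLMI_posSemidef hC (hε i)).trans Classical.skolem

/-- Multi-receiver version of Lemma 1: for a Hermitian positive semidefinite
transmit covariance `C`, a finite family of estimated channels `h i` with error
bounds `ε i > 0`, the worst-case harvested energy of every receiver is at least
`t` iff there is a family of reals `μ i ≥ 0` making every block matrix
`T_i = fromBlocks (μ_i I + C) (C h_i) ((C h_i)†) (h_i† C h_i − t − μ_i ε_i²)`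
positive semidefinite; hence the SDP (6) has the same feasible pairs `(C, t)`
as the original robust max-min problem (2). -/
theorem robust_constraints_iff_lmis_family
    (K : ℕ) (hK : 1 ≤ K)
    (C : Matrix (Fin K) (Fin K) ℂ) (hC : C.PosSemidef)
    (t : ℝ) (ι : Type) [Fintype ι]
    (h : ι → Fin K → ℂ) (ε : ι → ℝ) (hε : ∀ i, 0 < ε i) :
    (∀ i : ι, ∀ η : Fin K → ℂ, Real.sqrt (∑ j, ‖η j‖ ^ 2) ≤ ε i →
        t ≤ (star (h i + η) ⬝ᵥ (C *ᵥ (h i + η))).re) ↔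
      ∃ μ : ι → ℝ, ∀ i : ι, 0 ≤ μ i ∧
        (Matrix.fromBlocks
          ((μ i : ℂ) • (1 : Matrix (Fin K) (Fin K) ℂ) + C)
          (Matrix.replicateCol (Fin 1) (C *ᵥ h i))
          (Matrix.replicateRow (Fin 1) (star (C *ᵥ h i)))
          (Matrix.of fun _ _ : Fin 1 =>
            star (h i) ⬝ᵥ (C *ᵥ h i) - (t : ℂ) - ((μ i * ε i ^ 2 : ℝ) : ℂ))).PosSemidef :=
  robust_constraints_iff_lmis_family_general K C hC t ι h ε hε
end
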